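/- Let K ⊆ L be a field extension such that for every α, β ∈ L there exist a, b, c, d ∈ K with 1 + αβ = (a + bα)(c + dβ). Then K ⊆ L is vs-closed, i.e., for every pair of K-subspaces V, W of L, the K-span of {vw : v ∈ V, w ∈ W} equals {vw : v ∈ V, w ∈ W}. -/
import Mathlib


/-- The field extension `K ⊆ L` is vs-closed if for every pair of `K`-subspaces
`V, W` of `L`, the `K`-span of `P(V,W) = {vw : v ∈ V, w ∈ W}` equals `P(V,W)`. -/
def VSClosed (K L : Type*) [Field K] [Field L] [Algebra K L] : Prop :=
  ∀ V W : Submodule K L,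
    (Submodule.span K {x : L | ∃ v ∈ V, ∃ w ∈ W, x = v * w} : Set L) =
      {x : L | ∃ v ∈ V, ∃ w ∈ W, x = v * w}

theorem stmt19 (K L : Type*) [Field K] [Field L] [Algebra K L]
    (h : ∀ α β : L, ∃ a b c d : K,
      1 + α * β = (algebraMap K L a + algebraMap K L b * α) *
        (algebraMap K L c + algebraMap K L d * β)) :
    VSClosed K L := by
  intro V W
  set P : Set L := {x : L | ∃ v ∈ V, ∃ w ∈ W, x = v * w} with hP
  have hadd : ∀ x ∈ P, ∀ y ∈ P, x + y ∈ P := by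
    rintro x ⟨v1, hv1, w1, hw1, rfl⟩ y ⟨v2, hv2, w2, hw2, rfl⟩
    by_cases hv : v1 = 0
    · exact ⟨v2, hv2, w2, hw2, by simp [hv]⟩
    by_cases hw : w1 = 0
    · exact ⟨v2, hv2, w2, hw2, by simp [hw]⟩
    obtain ⟨a, b, c, d, heq⟩ := h (v2 / v1) (w2 / w1)
    refine ⟨a • v1 + b • v2, V.add_mem (V.smul_mem a hv1) (V.smul_mem b hv2),
      c • w1 + d • w2, W.add_mem (W.smul_mem c hw1) (W.smul_mem d hw2), ?_⟩
    simp only [Algebra.smul_def]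
    field_simp at heq
    linear_combination heq
  have hsub : P ⊆ (Submodule.span K P : Set L) := Submodule.subset_span
  refine Set.Subset.antisymm ?_ hsub
  let S : Submodule K L :=
    { carrier := P
      add_mem' := fun hx hy => hadd _ hx _ hy
      zero_mem' := ⟨0, V.zero_mem, 0, W.zero_mem, by simp⟩
      smul_mem' := by
        rintro k x ⟨v, hv, w, hw, rfl⟩
        exact ⟨k • v, V.smul_mem k hv, w, hw, by rw [smul_mul_assoc]⟩ }
  have : Submodule.span K P ≤ S := Submodule.span_le.mpr (fun x hx => hx)
  exact this
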